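/- For an ensemble (p, ρ) on a finite alphabet Γ with ρ_out positive definite, the Petz recovery map of the preparation channel equals the map that records the PGM Bayesian posterior on the diagonal: for every d×d complex matrix Y, D^{1/2} · A†(ρ_out^{-1/2} Y ρ_out^{-1/2}) · D^{1/2} = Σ_{a ∈ Γ} Tr(E_a Y) · |a⟩⟨a|, where D = diag(p) is the Γ×Γ diagonal matrix with entries p_a, A†(M) = Σ_a Tr(ρ_a M) |a⟩⟨a| is the Hilbert–Schmidt adjoint of the preparation channel, and |a⟩⟨a| is the Γ×Γ matrix unit at (a,a). In particular, applied to Y = ρ_x the output is the diagonal matrix of Bayesian posterior probabilities p(a|x) = Tr(E_a ρ_x). -/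

import Mathlib

open Matrix
open scoped ComplexOrder

/-!
Both sides are diagonal. Conjugating by `D^{1/2}` multiplies the `a`-th diagonal entry by
`p_a`, and cyclicity of the trace turns `p_a Tr(ρ_a ρ_out^{-1/2} Y ρ_out^{-1/2})` into
`Tr(E_a Y)`.
-/

/-- The positive semidefinite square root of a positive semidefinite matrix
(the Mathlib definition of December 2024, since removed from Mathlib). -/
noncomputable def Matrix.PosSemidef.sqrt {n 𝕜 : Type*} [Fintype n] [RCLike 𝕜] [DecidableEq n]
    {A : Matrix n n 𝕜} (hA : A.PosSemidef) : Matrix n n 𝕜 :=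
  hA.1.eigenvectorUnitary.1 * diagonal ((↑) ∘ (√·) ∘ hA.1.eigenvalues) *
  (star hA.1.eigenvectorUnitary : Matrix n n 𝕜)

/-- The `x`-th element `E_x = ρ_out^{-1/2} (p_x ρ_x) ρ_out^{-1/2}` of the pretty
good measurement associated with the ensemble `(p, ρ)`, where
`ρ_out = ∑ₐ pₐ ρₐ` and `ρ_out^{-1/2}` is the inverse of the positive
semidefinite square root of `ρ_out`. -/
noncomputable def pgm {n : ℕ} {Γ : Type*} [Fintype Γ]
    (p : Γ → ℝ) (ρ : Γ → Matrix (Fin n) (Fin n) ℂ)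
    (hout : (∑ a, (p a : ℂ) • ρ a).PosSemidef) (x : Γ) :
    Matrix (Fin n) (Fin n) ℂ :=
  hout.sqrt⁻¹ * ((p x : ℂ) • ρ x) * hout.sqrt⁻¹

theorem Matrix.diagonal_mul_single_mul_diagonal {m n α : Type*} [Fintype m] [DecidableEq m]
    [Fintype n] [DecidableEq n] [NonUnitalNonAssocSemiring α]
    (d : m → α) (e : n → α) (i : m) (j : n) (c : α) :
    diagonal d * single i j c * diagonal e = single i j (d i * c * e j) := by
  ext k l
  simp only [mul_diagonal, diagonal_mul, single_apply]
  split_ifs <;> simp_all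

theorem trace_pgm_mul {n : ℕ} {Γ : Type*} [Fintype Γ] (p : Γ → ℝ)
    (ρ : Γ → Matrix (Fin n) (Fin n) ℂ) (hout : (∑ a, (p a : ℂ) • ρ a).PosSemidef) (x : Γ)
    (Y : Matrix (Fin n) (Fin n) ℂ) :
    (pgm p ρ hout x * Y).trace = p x * (ρ x * (hout.sqrt⁻¹ * Y * hout.sqrt⁻¹)).trace := by
  rw [pgm, Matrix.mul_smul, Matrix.smul_mul, Matrix.smul_mul, trace_smul, smul_eq_mul,
    Matrix.mul_assoc, Matrix.mul_assoc, trace_mul_comm, Matrix.mul_assoc, Matrix.mul_assoc]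

theorem petz_recovery_eq_pgm_posterior_general {n : ℕ} {Γ : Type*} [Fintype Γ]
    [DecidableEq Γ]
    (p : Γ → ℝ) (hp : ∀ a, 0 < p a)
    (ρ : Γ → Matrix (Fin n) (Fin n) ℂ)
    (hpd : (∑ a, (p a : ℂ) • ρ a).PosDef)
    (Y : Matrix (Fin n) (Fin n) ℂ) :
    (Matrix.diagonal fun a => (Real.sqrt (p a) : ℂ)) *
        (∑ a, (ρ a *
              (hpd.posSemidef.sqrt⁻¹ * Y * hpd.posSemidef.sqrt⁻¹)).trace •
            Matrix.single a a (1 : ℂ)) *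
        (Matrix.diagonal fun a => (Real.sqrt (p a) : ℂ))
      = ∑ a, (pgm p ρ hpd.posSemidef a * Y).trace •
          Matrix.single a a (1 : ℂ) := by
  have hsqrt (a : Γ) : (Real.sqrt (p a) : ℂ) * 1 * Real.sqrt (p a) = p a := by
    rw [mul_one, ← Complex.ofReal_mul, Real.mul_self_sqrt (hp a).le]
  simp only [Matrix.mul_sum, Matrix.sum_mul, Matrix.mul_smul, Matrix.smul_mul,
    diagonal_mul_single_mul_diagonal, hsqrt, trace_pgm_mul]
  refine Finset.sum_congr rfl fun a _ => ?_
  rw [smul_single, smul_single, smul_eq_mul, smul_eq_mul, mul_one, mul_comm]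

/-- The Petz recovery map of the preparation channel `A(X) = ∑ₐ Xₐₐ ρₐ` with
respect to the input state `D = diag(p)` equals the map recording the PGM
Bayesian posterior on the diagonal: for every `d × d` matrix `Y`,
`D^{1/2} A†(ρ_out^{-1/2} Y ρ_out^{-1/2}) D^{1/2} = ∑ₐ Tr(Eₐ Y) |a⟩⟨a|`,
where `A†(M) = ∑ₐ Tr(ρₐ M) |a⟩⟨a|`. In particular, applied to `Y = ρ_x` the
output is the diagonal matrix of posterior probabilities `p(a|x) = Tr(Eₐ ρ_x)`. -/
theorem petz_recovery_eq_pgm_posterior {n : ℕ} {Γ : Type*} [Fintype Γ]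
    [DecidableEq Γ]
    (p : Γ → ℝ) (hp : ∀ a, 0 < p a) (hsum : ∑ a, p a = 1)
    (ρ : Γ → Matrix (Fin n) (Fin n) ℂ)
    (hρ : ∀ a, (ρ a).PosSemidef) (htr : ∀ a, (ρ a).trace = 1)
    (hpd : (∑ a, (p a : ℂ) • ρ a).PosDef)
    (Y : Matrix (Fin n) (Fin n) ℂ) :
    (Matrix.diagonal fun a => (Real.sqrt (p a) : ℂ)) *
        (∑ a, (ρ a *
              (hpd.posSemidef.sqrt⁻¹ * Y * hpd.posSemidef.sqrt⁻¹)).trace •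
            Matrix.single a a (1 : ℂ)) *
        (Matrix.diagonal fun a => (Real.sqrt (p a) : ℂ))
      = ∑ a, (pgm p ρ hpd.posSemidef a * Y).trace •
          Matrix.single a a (1 : ℂ) :=
  petz_recovery_eq_pgm_posterior_general p hp ρ hpd Y
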